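/- The Laplace mechanism M(x) = f(x) + Lap(Δ/ε) satisfies ε-differential privacy: for neighboring inputs x, x' with |f(x) − f(x')| ≤ Δ and any measurable set S ⊆ ℝ, Pr[M(x) ∈ S] ≤ e^ε · Pr[M(x') ∈ S]. -/

import Mathlib

/-! By the triangle inequality `-|z - a| ≤ |a - a'| - |z - a'|`, moving the centre of a Laplace
density of scale `b` from `a'` to `a` multiplies it pointwise by at most `e^{|a - a'| / b}`,
which is at most `e^ε` for `b = Δ / ε`. A pointwise bound between densities integrates to the
same bound between the measures, on every set. -/

open MeasureTheory

/-- Density of the Laplace distribution with scale `b`. -/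
noncomputable def laplaceDensity (b z : ℝ) : ℝ := (1 / (2 * b)) * Real.exp (-|z| / b)

lemma laplaceDensity_nonneg {b : ℝ} (hb : 0 ≤ b) (z : ℝ) : 0 ≤ laplaceDensity b z := by
  unfold laplaceDensity
  positivity

lemma laplaceDensity_le_exp_mul {b : ℝ} (hb : 0 ≤ b) (z z' : ℝ) :
    laplaceDensity b z ≤ Real.exp (|z - z'| / b) * laplaceDensity b z' := by
  have htriangle : -|z| / b ≤ |z - z'| / b + -|z'| / b := by
    rw [← add_div]
    gcongr
    linarith [abs_sub_abs_le_abs_sub z' z, abs_sub_comm z z']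
  calc laplaceDensity b z ≤ 1 / (2 * b) * Real.exp (|z - z'| / b + -|z'| / b) := by
        unfold laplaceDensity
        gcongr
    _ = Real.exp (|z - z'| / b) * laplaceDensity b z' := by
        rw [Real.exp_add, laplaceDensity]
        ring

lemma laplaceDensity_sub_le_exp_mul {Δ ε a a' : ℝ} (hε : 0 ≤ ε) (hshift : |a - a'| ≤ Δ)
    (z : ℝ) :
    laplaceDensity (Δ / ε) (z - a) ≤ Real.exp ε * laplaceDensity (Δ / ε) (z - a') := by
  have hΔ : 0 ≤ Δ := (abs_nonneg _).trans hshift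
  have hscale : |a - a'| / (Δ / ε) ≤ ε := by
    rw [div_div_eq_mul_div]
    exact div_le_of_le_mul₀ hΔ hε (by rw [mul_comm]; gcongr)
  calc laplaceDensity (Δ / ε) (z - a)
      ≤ Real.exp (|a - a'| / (Δ / ε)) * laplaceDensity (Δ / ε) (z - a') := by
        simpa [abs_sub_comm a' a] using
          laplaceDensity_le_exp_mul (by positivity) (z - a) (z - a')
    _ ≤ Real.exp ε * laplaceDensity (Δ / ε) (z - a') := by
        gcongr
        exact laplaceDensity_nonneg (by positivity) _

lemma withDensity_ofReal_le_smul {α : Type*} [MeasurableSpace α] {μ : Measure α}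
    {g h : α → ℝ} {c : ℝ} (hc : 0 ≤ c) (hgh : ∀ z, g z ≤ c * h z) :
    μ.withDensity (fun z => ENNReal.ofReal (g z)) ≤
      ENNReal.ofReal c • μ.withDensity (fun z => ENNReal.ofReal (h z)) := by
  rw [← withDensity_smul' _ _ ENNReal.ofReal_ne_top]
  refine withDensity_mono (ae_of_all _ fun z => ?_)
  simp only [Pi.smul_apply, smul_eq_mul, ← ENNReal.ofReal_mul hc]
  exact ENNReal.ofReal_le_ofReal (hgh z)

theorem laplace_mechanism_dp_general {D : Type*} (f : D → ℝ) (Δ ε : ℝ)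
    (hε : 0 < ε)
    (x x' : D) (hsens : |f x - f x'| ≤ Δ)
    (M : D → Measure ℝ)
    (hM : ∀ d, M d = volume.withDensity
      (fun z => ENNReal.ofReal (laplaceDensity (Δ / ε) (z - f d))))
    (S : Set ℝ) :
    M x S ≤ ENNReal.ofReal (Real.exp ε) * M x' S := by
  rw [hM x, hM x']
  exact withDensity_ofReal_le_smul (Real.exp_pos ε).le
    (laplaceDensity_sub_le_exp_mul hε.le hsens) S

/-- The Laplace mechanism `M(x) = f(x) + Lap(Δ/ε)` satisfies `ε`-DP: for inputs
`x, x'` with `|f x - f x'| ≤ Δ`, every measurable set `S` satisfies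
`Pr[M(x) ∈ S] ≤ e^ε · Pr[M(x') ∈ S]`. -/
theorem laplace_mechanism_dp {D : Type*} (f : D → ℝ) (Δ ε : ℝ)
    (hΔ : 0 < Δ) (hε : 0 < ε)
    (x x' : D) (hsens : |f x - f x'| ≤ Δ)
    (M : D → Measure ℝ)
    (hM : ∀ d, M d = volume.withDensity
      (fun z => ENNReal.ofReal (laplaceDensity (Δ / ε) (z - f d))))
    (S : Set ℝ) (hS : MeasurableSet S) :
    M x S ≤ ENNReal.ofReal (Real.exp ε) * M x' S :=
  laplace_mechanism_dp_general f Δ ε hε x x' hsens M hM S
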